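/- Let F and G be distributions from the same location-scale family, i.e., F^{-1} = s_F H^{-1} + ℓ_F and G^{-1} = s_G H^{-1} + ℓ_G for a non-degenerate distribution H, locations ℓ_F, ℓ_G ∈ ℝ and scales s_F, s_G > 0. Then Disp_+^{AVM}(F,G) > 0 if and only if s_F > s_G. Moreover, Disp_+^{AVM}(F,G) = (1/2)[s_F − s_G]_+ · ∫_0^1 (H^{-1}((1+α)/2) − H^{-1}((1−α)/2)) dα. -/
import Mathlib


open MeasureTheory
open scoped ENNReal

/-- `Disp₊^AVM` component, as a lower Lebesgue integral. -/
noncomputable def avmDispPlusL (qF qG : ℝ → ℝ) : ℝ≥0∞ :=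
  (1 / 2 : ℝ≥0∞) * ∫⁻ α in Set.Ioo (0:ℝ) 1,
    ENNReal.ofReal (max ((qF ((1 + α) / 2) - qG ((1 + α) / 2)) -
                         (qF ((1 - α) / 2) - qG ((1 - α) / 2))) 0)

/-- For `F`, `G` in a common location-scale family with non-degenerate
reference distribution `H`, `Disp₊^AVM(F,G) > 0` iff `s_F > s_G`, and
`Disp₊^AVM(F,G) = (1/2)[s_F − s_G]₊ ∫₀¹ (H⁻¹((1+α)/2) − H⁻¹((1−α)/2)) dα`. -/
theorem disp_location_scale (qF qG qH : ℝ → ℝ) (lF lG sF sG : ℝ)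
    (hH : MonotoneOn qH (Set.Ioo 0 1))
    (hHnd : ¬ ∃ c : ℝ, ∀ᵐ τ ∂(volume.restrict (Set.Ioo (0:ℝ) 1)), qH τ = c)
    (hsF : 0 < sF) (hsG : 0 < sG)
    (hqF : ∀ τ, qF τ = sF * qH τ + lF)
    (hqG : ∀ τ, qG τ = sG * qH τ + lG) :
    (0 < avmDispPlusL qF qG ↔ sG < sF) ∧
    avmDispPlusL qF qG =
      (1 / 2 : ℝ≥0∞) * ENNReal.ofReal (max (sF - sG) 0) *
        ∫⁻ α in Set.Ioo (0:ℝ) 1,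
          ENNReal.ofReal (qH ((1 + α) / 2) - qH ((1 - α) / 2)) := by
  set d : ℝ → ℝ := fun α => qH ((1 + α) / 2) - qH ((1 - α) / 2) with hd
  have hmem : ∀ α ∈ Set.Ioo (0:ℝ) 1, (1 - α)/2 ∈ Set.Ioo (0:ℝ) 1 ∧
      (1 + α)/2 ∈ Set.Ioo (0:ℝ) 1 ∧ (1 - α)/2 ≤ (1 + α)/2 := by
    intro α hα
    obtain ⟨h1, h2⟩ := hα
    exact ⟨⟨by linarith, by linarith⟩, ⟨by linarith, by linarith⟩, by linarith⟩
  have hd0 : ∀ α ∈ Set.Ioo (0:ℝ) 1, 0 ≤ d α := fun α hα =>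
    sub_nonneg.2 (hH (hmem α hα).1 (hmem α hα).2.1 (hmem α hα).2.2)
  -- pointwise identity of integrands
  have hcongr : ∀ᵐ α ∂(volume.restrict (Set.Ioo (0:ℝ) 1)),
      ENNReal.ofReal (max ((qF ((1 + α) / 2) - qG ((1 + α) / 2)) -
                         (qF ((1 - α) / 2) - qG ((1 - α) / 2))) 0)
      = ENNReal.ofReal (max (sF - sG) 0) * ENNReal.ofReal (d α) := by
    filter_upwards [ae_restrict_mem measurableSet_Ioo] with α hα
    have h1 : (qF ((1 + α) / 2) - qG ((1 + α) / 2)) -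
        (qF ((1 - α) / 2) - qG ((1 - α) / 2)) = (sF - sG) * d α := by
      simp only [hqF, hqG, hd]; ring
    rw [h1, ← ENNReal.ofReal_mul (le_max_right _ _)]
    rcases le_or_gt sG sF with h | h
    · rw [max_eq_left (sub_nonneg.2 h),
        max_eq_left (mul_nonneg (sub_nonneg.2 h) (hd0 α hα))]
    · rw [max_eq_right (sub_nonpos.2 h.le),
        max_eq_right (mul_nonpos_of_nonpos_of_nonneg (sub_nonpos.2 h.le) (hd0 α hα)),
        zero_mul]
  have hmain : avmDispPlusL qF qG =
      (1 / 2 : ℝ≥0∞) * ENNReal.ofReal (max (sF - sG) 0) *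
        ∫⁻ α in Set.Ioo (0:ℝ) 1, ENNReal.ofReal (d α) := by
    rw [avmDispPlusL, lintegral_congr_ae hcongr,
      lintegral_const_mul' _ _ ENNReal.ofReal_ne_top, ← mul_assoc]
  refine ⟨?_, hmain⟩
  -- nonvanishing of the integral of d
  have haem : AEMeasurable (fun α => ENNReal.ofReal (d α))
      (volume.restrict (Set.Ioo (0:ℝ) 1)) := by
    have h1 : MonotoneOn (fun α => qH ((1 + α)/2)) (Set.Ioo (0:ℝ) 1) :=
      fun a ha b hb hab => hH (hmem a ha).2.1 (hmem b hb).2.1 (by linarith)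
    have h2 : AntitoneOn (fun α => qH ((1 - α)/2)) (Set.Ioo (0:ℝ) 1) :=
      fun a ha b hb hab => hH (hmem b hb).1 (hmem a ha).1 (by linarith)
    exact ENNReal.measurable_ofReal.comp_aemeasurable
      ((aemeasurable_restrict_of_monotoneOn measurableSet_Ioo h1).sub
        (aemeasurable_restrict_of_antitoneOn measurableSet_Ioo h2))
  have hI : (∫⁻ α in Set.Ioo (0:ℝ) 1, ENNReal.ofReal (d α)) ≠ 0 := by
    intro h0
    rw [lintegral_eq_zero_iff' haem] at h0
    have hg : ∀ᵐ α ∂(volume.restrict (Set.Ioo (0:ℝ) 1)),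
        α ∈ Set.Ioo (0:ℝ) 1 ∧ d α = 0 := by
      filter_upwards [ae_restrict_mem measurableSet_Ioo, h0] with α hα h0α
      refine ⟨hα, le_antisymm ?_ (hd0 α hα)⟩
      have := ENNReal.ofReal_eq_zero.1 h0α
      linarith
    have hex : ∀ t : ℝ, t < 1 → ∃ α, (α ∈ Set.Ioo (0:ℝ) 1 ∧ d α = 0) ∧ t < α := by
      intro t ht
      have hm1 : max t 0 < 1 := max_lt ht one_pos
      have hsub : Set.Ioo (max t 0) 1 ⊆ Set.Ioo (0:ℝ) 1 :=
        Set.Ioo_subset_Ioo (le_max_right _ _) le_rfl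
      have hne : volume.restrict (Set.Ioo (max t 0) 1) ≠ 0 := by
        simp only [Ne, Measure.restrict_eq_zero, Real.volume_Ioo,
          ENNReal.ofReal_eq_zero, not_le]
        linarith
      haveI : Filter.NeBot (ae (volume.restrict (Set.Ioo (max t 0) 1))) :=
        ae_neBot.mpr hne
      have hg' : ∀ᵐ α ∂(volume.restrict (Set.Ioo (max t 0) 1)),
          (α ∈ Set.Ioo (0:ℝ) 1 ∧ d α = 0) ∧ α ∈ Set.Ioo (max t 0) 1 :=
        (hg.filter_mono (ae_mono (Measure.restrict_mono hsub le_rfl))).and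
          (ae_restrict_mem measurableSet_Ioo)
      obtain ⟨α, hα1, hα2⟩ := hg'.exists
      exact ⟨α, hα1, lt_of_le_of_lt (le_max_left _ _) hα2.1⟩
    -- from d α = 0, qH is constant on [(1-α)/2, (1+α)/2]
    have hsq : ∀ α ∈ Set.Ioo (0:ℝ) 1, d α = 0 → ∀ x ∈ Set.Ioo (0:ℝ) 1,
        (1 - α)/2 ≤ x → x ≤ (1 + α)/2 → qH x = qH ((1 - α)/2) := by
      intro α hα hdα x hx hx1 hx2
      have e1 := hH (hmem α hα).1 hx hx1
      have e2 := hH hx (hmem α hα).2.1 hx2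
      have e3 : qH ((1 + α)/2) - qH ((1 - α)/2) = 0 := hdα
      linarith
    obtain ⟨α₀, ⟨hα₀, hdα₀⟩, -⟩ := hex 0 one_pos
    apply hHnd
    refine ⟨qH ((1 - α₀)/2), (ae_restrict_mem measurableSet_Ioo).mono ?_⟩
    intro τ hτ
    obtain ⟨hτ1, hτ2⟩ := hτ
    have habs : |2 * τ - 1| < 1 := abs_lt.2 ⟨by linarith, by linarith⟩
    obtain ⟨α, ⟨hα, hdα⟩, hαgt⟩ := hex (max α₀ |2 * τ - 1|) (max_lt hα₀.2 habs)
    have hgt1 : α₀ < α := lt_of_le_of_lt (le_max_left _ _) hαgt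
    have hgt2 : |2 * τ - 1| < α := lt_of_le_of_lt (le_max_right _ _) hαgt
    obtain ⟨ht1, ht2⟩ := abs_lt.1 hgt2
    have hqτ : qH τ = qH ((1 - α)/2) :=
      hsq α hα hdα τ ⟨hτ1, hτ2⟩ (by linarith) (by linarith)
    have hqα₀ : qH ((1 - α₀)/2) = qH ((1 - α)/2) :=
      hsq α hα hdα ((1 - α₀)/2) (hmem α₀ hα₀).1 (by linarith)
        (by have := hα₀.1; linarith)
    rw [hqτ, hqα₀]
  rw [hmain]
  constructor
  · intro hpos
    by_contra h
    push_neg at h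
    rw [max_eq_right (sub_nonpos.2 h)] at hpos
    simp at hpos
  · intro h
    have h1 : ENNReal.ofReal (max (sF - sG) 0) ≠ 0 := by
      simp only [Ne, ENNReal.ofReal_eq_zero, not_le]
      exact lt_max_of_lt_left (sub_pos.2 h)
    have h2 : (1 / 2 : ℝ≥0∞) ≠ 0 := by norm_num
    exact pos_iff_ne_zero.mpr (mul_ne_zero (mul_ne_zero h2 h1) hI)
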